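/- arXiv:1111.2970 — 7 statements merged into one kernel-verified Lean document; each statement's English description precedes it below -/
import Mathlib

section
/- For every natural number n and every real δ > 0, |T_n(-1-δ)| ≥ 1 + n^2 δ, where T_n is the Chebyshev polynomial of the first kind of degree n. -/
/-!
Write `x ≥ 1` as `cosh θ`, so that `T_n(x) = cosh (n θ)`. Since `cosh y - 1 = 2 sinh² (y / 2)`
and `sinh` is superadditive on `[0, ∞)`, `cosh (n θ) - 1 ≥ n² (cosh θ - 1)`, i.e.
`T_n(1 + δ) ≥ 1 + n² δ`. Finally `T_n(-x) = ± T_n(x)`.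
-/

open Polynomial Real

theorem Real.nat_mul_sinh_le_sinh_nat_mul (n : ℕ) {u : ℝ} (hu : 0 ≤ u) :
    n * sinh u ≤ sinh (n * u) := by
  induction n with
  | zero => simp
  | succ n ih =>
    have hsinh_nu : 0 ≤ sinh (n * u) := sinh_nonneg_iff.mpr (by positivity)
    have hsinh_u : 0 ≤ sinh u := sinh_nonneg_iff.mpr hu
    calc ((n + 1 : ℕ) : ℝ) * sinh u = n * sinh u * 1 + 1 * sinh u := by push_cast; ring
      _ ≤ sinh (n * u) * cosh u + cosh (n * u) * sinh u := by
        gcongr <;> exact one_le_cosh _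
      _ = sinh (((n + 1 : ℕ) : ℝ) * u) := by rw [← sinh_add]; push_cast; ring_nf

theorem Real.sq_mul_cosh_sub_one_le_cosh_nat_mul_sub_one (n : ℕ) (θ : ℝ) :
    n ^ 2 * (cosh θ - 1) ≤ cosh (n * θ) - 1 := by
  have cosh_sub_one (y : ℝ) : cosh y - 1 = 2 * sinh (y / 2) ^ 2 := by
    nth_rw 1 [show y = 2 * (y / 2) by ring, cosh_two_mul, cosh_sq]
    ring
  have hu : 0 ≤ |θ| / 2 := by positivity
  rw [← cosh_abs θ, ← cosh_abs (n * θ), abs_mul, Nat.abs_cast, cosh_sub_one, cosh_sub_one,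
    mul_div_assoc]
  calc (n : ℝ) ^ 2 * (2 * sinh (|θ| / 2) ^ 2) = 2 * (n * sinh (|θ| / 2)) ^ 2 := by ring
    _ ≤ 2 * sinh (n * (|θ| / 2)) ^ 2 := by
      gcongr
      exact nat_mul_sinh_le_sinh_nat_mul n hu

theorem Polynomial.Chebyshev.one_add_sq_mul_sub_one_le_T_eval (n : ℕ) {x : ℝ} (hx : 1 ≤ x) :
    1 + n ^ 2 * (x - 1) ≤ (Chebyshev.T ℝ n).eval x := by
  rw [← cosh_arcosh hx, Chebyshev.T_real_cosh]
  have := sq_mul_cosh_sub_one_le_cosh_nat_mul_sub_one n (arcosh x)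
  push_cast at this ⊢
  linarith

/-- For every natural number `n` and every real `δ > 0`,
`|T_n(-1-δ)| ≥ 1 + n^2 δ`, where `T_n` is the Chebyshev polynomial of the first kind. -/
theorem chebyshev_abs_ge_outside (n : ℕ) (δ : ℝ) (hδ : 0 < δ) :
    1 + (n : ℝ) ^ 2 * δ ≤ |(Polynomial.Chebyshev.T ℝ n).eval (-1 - δ)| := by
  have h := Chebyshev.one_add_sq_mul_sub_one_le_T_eval n (x := 1 + δ) (by linarith)
  rw [add_sub_cancel_left] at h
  rw [show -1 - δ = -(1 + δ) by ring, Chebyshev.T_eval_neg, abs_mul,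
    ← Int.cast_abs, Int.abs_negOnePow, Int.cast_one, one_mul]
  exact h.trans (le_abs_self _)
end

section
/- Let m ≥ 2 be a perfect square and define C_m(x) = Ĉ_m(x)/Ĉ_m(0) where Ĉ_m(x) = T_{√m}((x-(m+1)/2)/((m-1)/2)). Then C_m(0) = 1 and for every real x with 1 ≤ x ≤ m, |C_m(x)|^2 ≤ 1/9. -/
/-!
On `[1, m]` the argument of `T_r` ranges over `[-1, 1]`, where `|T_r| ≤ 1`. At `x = 0` it is
`-(r² + 1)/(r² - 1) = -cosh t` with `t = log ((r + 1)/(r - 1))`, so `|Ĉ_m(0)| = cosh (r t)`.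
The bound `log (1 + u) ≥ 2u/(u + 2)` gives `r t ≥ 2`, hence `cosh (r t) ≥ 1 + (r t)²/2 ≥ 3`.
-/

open Polynomial

namespace Real

theorem one_add_sq_div_two_le_cosh (t : ℝ) : 1 + t ^ 2 / 2 ≤ cosh t := by
  have h := sum_le_hasSum (Finset.range 2)
    (fun n _ => div_nonneg (Even.pow_nonneg (even_two_mul n) t) (by positivity)) (hasSum_cosh t)
  simpa [Finset.sum_range_succ] using h

theorem two_div_le_log_add_one_div_sub_one {r : ℝ} (hr : 1 < r) :
    2 / r ≤ log ((r + 1) / (r - 1)) := by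
  have h := le_log_one_add_of_nonneg (x := 2 / (r - 1)) (by positivity)
  have hr' : r - 1 ≠ 0 := by linarith
  have hsum : 2 / (r - 1) + 2 = 2 * r / (r - 1) := by field_simp; ring
  have hlhs : 2 * (2 / (r - 1)) / (2 / (r - 1) + 2) = 2 / r := by rw [hsum]; field_simp
  have harg : 1 + 2 / (r - 1) = (r + 1) / (r - 1) := by field_simp; ring
  rwa [hlhs, harg] at h

theorem cosh_log_add_one_div_sub_one {r : ℝ} (hr : 1 < r) :
    cosh (log ((r + 1) / (r - 1))) = (r ^ 2 + 1) / (r ^ 2 - 1) := by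
  have hr' : r - 1 ≠ 0 := by linarith
  have hr'' : r ^ 2 - 1 ≠ 0 := by nlinarith
  rw [cosh_log (by apply div_pos <;> linarith)]
  field_simp
  ring

end Real

theorem abs_sub_midpoint_div_le_one {a b x : ℝ} (hab : a < b) (hax : a ≤ x) (hxb : x ≤ b) :
    |(x - (b + a) / 2) / ((b - a) / 2)| ≤ 1 := by
  rw [abs_div, abs_of_pos (by linarith : 0 < (b - a) / 2), div_le_one (by linarith), abs_le]
  constructor <;> linarith

namespace Polynomial.Chebyshev

theorem three_le_eval_T_real_sq_add_one_div_sq_sub_one {n : ℕ} (hn : 2 ≤ n) :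
    3 ≤ (T ℝ n).eval (((n : ℝ) ^ 2 + 1) / ((n : ℝ) ^ 2 - 1)) := by
  have hn' : (1 : ℝ) < n := by exact_mod_cast hn
  rw [← Real.cosh_log_add_one_div_sub_one hn', T_real_cosh]
  have h2 : 2 ≤ (n : ℝ) * Real.log ((n + 1) / (n - 1)) := by
    rw [← div_le_iff₀' (by linarith)]
    exact Real.two_div_le_log_add_one_div_sub_one hn'
  calc (3 : ℝ) ≤ 1 + ((n : ℝ) * Real.log ((n + 1) / (n - 1))) ^ 2 / 2 := by nlinarith
    _ ≤ _ := by simpa using Real.one_add_sq_div_two_le_cosh _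

end Polynomial.Chebyshev

/-- Let `m ≥ 2` be a perfect square (`m = r^2`) and define
`C_m(x) = Ĉ_m(x)/Ĉ_m(0)` where `Ĉ_m(x) = T_√m((x-(m+1)/2)/((m-1)/2))`.
Then `C_m(0) = 1` and for every real `x` with `1 ≤ x ≤ m`, `|C_m(x)|^2 ≤ 1/9`. -/
theorem chebyshev_Cm_bound (m r : ℕ) (hm : 2 ≤ m) (hr : r ^ 2 = m)
    (hatC : ℝ → ℝ)
    (hhatC : ∀ x : ℝ, hatC x =
      (Polynomial.Chebyshev.T ℝ r).eval ((x - ((m : ℝ) + 1) / 2) / (((m : ℝ) - 1) / 2)))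
    (C : ℝ → ℝ) (hC : ∀ x : ℝ, C x = hatC x / hatC 0) :
    C 0 = 1 ∧ ∀ x : ℝ, 1 ≤ x → x ≤ (m : ℝ) → |C x| ^ 2 ≤ 1 / 9 := by
  have hr2 : 2 ≤ r := by nlinarith
  have hm1 : (1 : ℝ) < m := by exact_mod_cast hm
  have hatC_zero : 3 ≤ |hatC 0| := by
    have hm' : (m : ℝ) = (r : ℝ) ^ 2 := by exact_mod_cast hr.symm
    have harg : (0 - ((m : ℝ) + 1) / 2) / (((m : ℝ) - 1) / 2) =
        -(((r : ℝ) ^ 2 + 1) / ((r : ℝ) ^ 2 - 1)) := by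
      rw [← hm']
      field_simp
      ring
    rw [hhatC, harg, Chebyshev.T_eval_neg, abs_mul, abs_unit_intCast, one_mul]
    exact (Chebyshev.three_le_eval_T_real_sq_add_one_div_sq_sub_one hr2).trans (le_abs_self _)
  refine ⟨by rw [hC, div_self (abs_pos.mp (by linarith))], fun x hx1 hxm => ?_⟩
  have hatC_le : |hatC x| ≤ 1 := by
    rw [hhatC]
    exact Chebyshev.abs_eval_T_real_le_one _ (abs_sub_midpoint_div_le_one hm1 hx1 hxm)
  have hCx : |C x| ≤ 1 / 3 := by
    rw [hC, abs_div, div_le_iff₀ (by linarith)]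
    linarith
  nlinarith [abs_nonneg (C x)]
end

section
/- Consider a chain of n particles each of dimension d, a vector φ in (ℂ^d)^{⊗n}, and two cuts: between particles i, i+1 and between particles j, j+1. If r_i and r_j are the Schmidt ranks of φ with respect to the two cuts, then d^{-|i-j|} r_j ≤ r_i ≤ d^{|i-j|} r_j. -/
/-!
Moving particle `a` across a cut `S` reshapes the coefficient matrix: a row of the matrix for
`insert a S` is a row of the matrix for `S` read through one of `d` maps of column configurations
(one per value of particle `a`), so its row space lies in a sum of `d` images of the old one and the
rank grows at most `d`-fold; the reverse bound is the same argument on columns. Adjacent cuts of a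
chain differ by one particle, and iterating over the `|i - j|` particles between two cuts gives the
bounds.
-/

/-- The state space of `n` particles of local dimension `d`, `(ℂ^d)^{⊗n}`. -/
def NState (n d : ℕ) : Type := (Fin n → Fin d) → ℂ

/-- Merge a configuration on a subset `S` with one on its complement. -/
def mergeCfg {n d : ℕ} (S : Finset (Fin n)) (f : {i // i ∈ S} → Fin d)
    (g : {i // i ∉ S} → Fin d) : Fin n → Fin d :=
  fun i => if h : i ∈ S then f ⟨i, h⟩ else g ⟨i, h⟩

/-- The Schmidt rank of a state with respect to the bipartition `(S, Sᶜ)`. -/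
noncomputable def SR {n d : ℕ} (S : Finset (Fin n)) (φ : NState n d) : ℕ :=
  (Matrix.of fun f g => φ (mergeCfg S f g)).rank

/-- The cut between particles `i` and `i+1` of a 1D chain: the first `i` particles. -/
def cutSet (n i : ℕ) : Finset (Fin n) := Finset.univ.filter fun t => (t : ℕ) < i

open Module

theorem Submodule.finrank_iSup_map_le {K V W ι : Type*} [Field K] [AddCommGroup V] [Module K V]
    [AddCommGroup W] [Module K W] [Fintype ι] (p : Submodule K V) [FiniteDimensional K p]
    (f : ι → V →ₗ[K] W) :
    finrank K ↥(⨆ i, p.map (f i)) ≤ Fintype.card ι * finrank K p := by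
  classical
  let L := LinearMap.lsum K (fun _ : ι => p) K fun i => f i ∘ₗ p.subtype
  have hle : ⨆ i, p.map (f i) ≤ LinearMap.range L := iSup_le fun i => by
    rintro _ ⟨v, hv, rfl⟩
    exact ⟨Pi.single i ⟨v, hv⟩, LinearMap.lsum_piSingle ..⟩
  calc finrank K ↥(⨆ i, p.map (f i))
      ≤ finrank K (LinearMap.range L) := Submodule.finrank_mono hle
    _ ≤ finrank K (ι → p) := LinearMap.finrank_range_le L
    _ = Fintype.card ι * finrank K p := by simp [Module.finrank_pi_fintype]

theorem Matrix.rank_le_card_mul_rank_of_row_eq_comp {K m n m' n' κ : Type*} [Field K]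
    [Fintype m] [Fintype n] [Fintype m'] [Fintype n'] [Fintype κ]
    (A : Matrix m n K) (B : Matrix m' n' K) (σ : κ → n' → n)
    (h : ∀ i', ∃ k i, B i' = A i ∘ σ k) :
    B.rank ≤ Fintype.card κ * A.rank := by
  rw [rank_eq_finrank_span_row, rank_eq_finrank_span_row]
  refine le_trans (Submodule.finrank_mono ?_)
    (Submodule.finrank_iSup_map_le _ fun k => LinearMap.funLeft K K (σ k))
  refine Submodule.span_le.mpr ?_
  rintro _ ⟨i', rfl⟩
  obtain ⟨k, i, hB⟩ := h i'
  exact Submodule.mem_iSup_of_mem k ⟨A i, Submodule.subset_span ⟨i, rfl⟩, hB.symm⟩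

section SchmidtRank

variable {n d : ℕ} {S : Finset (Fin n)} {a : Fin n}

theorem mergeCfg_insert (f : {t // t ∈ insert a S} → Fin d)
    (g : {t // t ∉ insert a S} → Fin d) :
    mergeCfg (insert a S) f g =
      mergeCfg S (fun t => f ⟨t, Finset.mem_insert_of_mem t.2⟩)
        (fun t => if h : t.1 = a then f ⟨a, Finset.mem_insert_self a S⟩
          else g ⟨t, by simp [h, t.2]⟩) := by
  funext x
  by_cases hxa : x = a
  · subst hxa; by_cases hx : x ∈ S <;> simp [mergeCfg, hx]
  · by_cases hx : x ∈ S <;> simp [mergeCfg, hx, hxa]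

theorem mergeCfg_eq_mergeCfg_insert (ha : a ∉ S) (f : {t // t ∈ S} → Fin d)
    (g : {t // t ∉ S} → Fin d) :
    mergeCfg S f g =
      mergeCfg (insert a S)
        (fun t => if h : t.1 = a then g ⟨a, ha⟩
          else f ⟨t, (Finset.mem_insert.mp t.2).resolve_left h⟩)
        (fun t => g ⟨t, fun h => t.2 (Finset.mem_insert_of_mem h)⟩) := by
  funext x
  by_cases hxa : x = a
  · subst hxa; simp [mergeCfg, ha]
  · by_cases hx : x ∈ S <;> simp [mergeCfg, hx, hxa]

theorem SR_insert_le_mul (φ : NState n d) : SR (insert a S) φ ≤ d * SR S φ := by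
  unfold SR
  simpa only [Fintype.card_fin] using Matrix.rank_le_card_mul_rank_of_row_eq_comp _ _
    (fun (b : Fin d) (g : {t // t ∉ insert a S} → Fin d) (t : {t // t ∉ S}) =>
      if h : t.1 = a then b else g ⟨t, by simp [h, t.2]⟩)
    fun f => ⟨f ⟨a, Finset.mem_insert_self a S⟩, fun t => f ⟨t, Finset.mem_insert_of_mem t.2⟩,
      funext fun g => by
        simp only [Matrix.of_apply, mergeCfg_insert f g, Function.comp_apply]⟩

theorem SR_le_mul_SR_insert (φ : NState n d) (ha : a ∉ S) :
    SR S φ ≤ d * SR (insert a S) φ := by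
  unfold SR
  rw [← Matrix.rank_transpose, ← Matrix.rank_transpose (Matrix.of _)]
  simpa only [Fintype.card_fin] using Matrix.rank_le_card_mul_rank_of_row_eq_comp _ _
    (fun (b : Fin d) (f : {t // t ∈ S} → Fin d) (t : {t // t ∈ insert a S}) =>
      if h : t.1 = a then b else f ⟨t, (Finset.mem_insert.mp t.2).resolve_left h⟩)
    fun g => ⟨g ⟨a, ha⟩, fun t => g ⟨t, fun h => t.2 (Finset.mem_insert_of_mem h)⟩,
      funext fun f => by
        simp only [Matrix.transpose_apply, Matrix.of_apply, mergeCfg_eq_mergeCfg_insert ha f g,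
          Function.comp_apply]⟩

end SchmidtRank

section GrowthBound

variable {r : ℕ → ℕ} {c n i j : ℕ}

theorem le_pow_sub_mul_of_forall_succ_le (h : ∀ k < n, r (k + 1) ≤ c * r k) (hij : i ≤ j)
    (hjn : j ≤ n) : r j ≤ c ^ (j - i) * r i := by
  induction j, hij using Nat.le_induction with
  | base => simp
  | succ k hik ih =>
    calc r (k + 1) ≤ c * r k := h k hjn
      _ ≤ c * (c ^ (k - i) * r i) := Nat.mul_le_mul_left c (ih (by omega))
      _ = c ^ (k + 1 - i) * r i := by rw [Nat.sub_add_comm hik, pow_succ]; ring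

theorem le_pow_sub_mul_of_forall_le_succ (h : ∀ k < n, r k ≤ c * r (k + 1)) (hij : i ≤ j)
    (hjn : j ≤ n) : r i ≤ c ^ (j - i) * r j := by
  induction j, hij using Nat.le_induction with
  | base => simp
  | succ k hik ih =>
    calc r i ≤ c ^ (k - i) * r k := ih (by omega)
      _ ≤ c ^ (k - i) * (c * r (k + 1)) := Nat.mul_le_mul_left _ (h k hjn)
      _ = c ^ (k + 1 - i) * r (k + 1) := by rw [Nat.sub_add_comm hik, pow_succ]; ring

theorem le_pow_natAbs_sub_mul (hup : ∀ k < n, r (k + 1) ≤ c * r k)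
    (hdown : ∀ k < n, r k ≤ c * r (k + 1)) (hi : i ≤ n) (hj : j ≤ n) :
    r j ≤ c ^ ((i : ℤ) - j).natAbs * r i := by
  rcases le_total i j with hij | hji
  · rw [show ((i : ℤ) - j).natAbs = j - i by omega]
    exact le_pow_sub_mul_of_forall_succ_le hup hij hj
  · rw [show ((i : ℤ) - j).natAbs = i - j by omega]
    exact le_pow_sub_mul_of_forall_le_succ hdown hji hi

end GrowthBound

theorem cutSet_succ {n k : ℕ} (hk : k < n) :
    cutSet n (k + 1) = insert ⟨k, hk⟩ (cutSet n k) := by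
  ext t
  simp only [cutSet, Finset.mem_filter, Finset.mem_univ, true_and, Finset.mem_insert, Fin.ext_iff]
  omega

/-- For a state `φ` of a chain of `n` particles of dimension `d`, the Schmidt
ranks `r_i`, `r_j` with respect to the cuts `(i, i+1)` and `(j, j+1)` satisfy
`d^{-|i-j|} r_j ≤ r_i ≤ d^{|i-j|} r_j`. -/
theorem SR_nearby_cuts {n d : ℕ} (φ : NState n d) (i j : ℕ) (hi : i ≤ n) (hj : j ≤ n) :
    SR (cutSet n j) φ ≤ d ^ ((i : ℤ) - j).natAbs * SR (cutSet n i) φ ∧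
    SR (cutSet n i) φ ≤ d ^ ((i : ℤ) - j).natAbs * SR (cutSet n j) φ := by
  have hup : ∀ k < n, SR (cutSet n (k + 1)) φ ≤ d * SR (cutSet n k) φ := fun k hk => by
    rw [cutSet_succ hk]
    exact SR_insert_le_mul φ
  have hdown : ∀ k < n, SR (cutSet n k) φ ≤ d * SR (cutSet n (k + 1)) φ := fun k hk => by
    rw [cutSet_succ hk]
    exact SR_le_mul_SR_insert φ (by simp [cutSet])
  refine ⟨le_pow_natAbs_sub_mul hup hdown hi hj, ?_⟩
  rw [← neg_sub, Int.natAbs_neg]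
  exact le_pow_natAbs_sub_mul hup hdown hj hi
end

section
/- Suppose K is a (D,Δ)-approximate ground-space projection (AGSP) with D·Δ ≤ 1/2 for a Hamiltonian with unique ground state Ω on a bipartite Hilbert space H_L ⊗ H_R. Then there exists a product state φ = L ⊗ R with |⟨Ω, φ⟩| ≥ 1/√(2D). -/
/-- The inner product on the bipartite space `H_L ⊗ H_R ≅ Matrix (Fin a) (Fin b) ℂ`. -/
noncomputable def mInner {a b : ℕ} (M N : Matrix (Fin a) (Fin b) ℂ) : ℂ :=
  ∑ i, ∑ j, star (M i j) * N i j

/-- Squared norm. -/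
noncomputable def mNormSq {a b : ℕ} (M : Matrix (Fin a) (Fin b) ℂ) : ℝ :=
  (mInner M M).re

/-! Let `μ` be the largest overlap `|⟨Ω, u ⊗ v⟩|` of `Ω` with a normalized product state, attained
at `φ`. A matrix `N` of rank `r` is a sum of `r` product vectors `uᵢ ⊗ xᵢ` with orthonormal `uᵢ`
and `∑ ‖xᵢ‖² ≤ ‖N‖²`, so `|⟨Ω, N⟩| ≤ μ √r ‖N‖`. For `N = Kφ` we have `r ≤ D`,
`⟨Ω, Kφ⟩ = ⟨Ω, φ⟩` of modulus `μ`, and `‖Kφ‖² ≤ μ² + Δ`; hence `1 ≤ D (μ² + Δ) ≤ D μ² + 1/2`. -/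

open Matrix

namespace AGSP

variable {a b : ℕ}

def toEuclidean : Matrix (Fin a) (Fin b) ℂ →ₗ[ℂ] EuclideanSpace ℂ (Fin a × Fin b) where
  toFun M := WithLp.toLp 2 fun p => M p.1 p.2
  map_add' _ _ := rfl
  map_smul' _ _ := rfl

theorem mInner_eq_inner (M N : Matrix (Fin a) (Fin b) ℂ) :
    mInner M N = inner ℂ (toEuclidean M) (toEuclidean N) := by
  simp only [mInner, PiLp.inner_apply, RCLike.inner_apply', Fintype.sum_prod_type]
  rfl

theorem mNormSq_eq_norm_sq (M : Matrix (Fin a) (Fin b) ℂ) : mNormSq M = ‖toEuclidean M‖ ^ 2 := by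
  rw [mNormSq, mInner_eq_inner, inner_self_eq_norm_sq_to_K]
  norm_cast

theorem mNormSq_eq_sum (M : Matrix (Fin a) (Fin b) ℂ) : mNormSq M = ∑ i, ∑ j, ‖M i j‖ ^ 2 := by
  rw [mNormSq_eq_norm_sq, EuclideanSpace.norm_sq_eq, Fintype.sum_prod_type]
  rfl

theorem mInner_sum_right {ι : Type*} (s : Finset ι) (M : Matrix (Fin a) (Fin b) ℂ)
    (N : ι → Matrix (Fin a) (Fin b) ℂ) : mInner M (∑ i ∈ s, N i) = ∑ i ∈ s, mInner M (N i) := by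
  simp only [mInner_eq_inner, map_sum, inner_sum]

theorem mInner_add_right (M N N' : Matrix (Fin a) (Fin b) ℂ) :
    mInner M (N + N') = mInner M N + mInner M N' := by
  simp only [mInner_eq_inner, map_add, inner_add_right]

theorem mInner_sub_right (M N N' : Matrix (Fin a) (Fin b) ℂ) :
    mInner M (N - N') = mInner M N - mInner M N' := by
  simp only [mInner_eq_inner, map_sub, inner_sub_right]

theorem mInner_smul_right (c : ℂ) (M N : Matrix (Fin a) (Fin b) ℂ) :
    mInner M (c • N) = c * mInner M N := by
  rw [mInner_eq_inner, map_smul, inner_smul_right, ← mInner_eq_inner]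

theorem nonempty_fin_of_mInner_self_eq_one {Ω : Matrix (Fin a) (Fin b) ℂ}
    (hΩ : mInner Ω Ω = 1) : Nonempty (Fin a) ∧ Nonempty (Fin b) := by
  constructor <;> refine Fin.pos_iff_nonempty.1 (Nat.pos_of_ne_zero ?_) <;> rintro rfl <;>
    simp [mInner] at hΩ

theorem mInner_vecMulVec_self (u : EuclideanSpace ℂ (Fin a)) (v : EuclideanSpace ℂ (Fin b)) :
    mInner (vecMulVec u v) (vecMulVec u v) = ((‖u‖ ^ 2 * ‖v‖ ^ 2 : ℝ) : ℂ) := by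
  have h {n : ℕ} (x : EuclideanSpace ℂ (Fin n)) : ∑ i, star (x i) * x i = ((‖x‖ ^ 2 : ℝ) : ℂ) := by
    simp [EuclideanSpace.norm_sq_eq, Complex.conj_mul']
  simp only [mInner, vecMulVec_apply, star_mul', Complex.ofReal_mul, ← h, Finset.sum_mul_sum]
  exact Finset.sum_congr rfl fun _ _ => Finset.sum_congr rfl fun _ _ => by ring

theorem exists_eq_sum_vecMulVec (N : Matrix (Fin a) (Fin b) ℂ) :
    ∃ (u : Fin N.rank → EuclideanSpace ℂ (Fin a)) (x : Fin N.rank → EuclideanSpace ℂ (Fin b)),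
      (∀ i, ‖u i‖ = 1) ∧ N = ∑ i, vecMulVec (u i) (x i) ∧ ∑ i, ‖x i‖ ^ 2 ≤ mNormSq N := by
  let col (j : Fin b) : EuclideanSpace ℂ (Fin a) := WithLp.toLp 2 (Nᵀ j)
  let W := (Submodule.span ℂ (Set.range Nᵀ)).map
    (WithLp.linearEquiv 2 ℂ (Fin a → ℂ)).symm.toLinearMap
  have hW : Module.finrank ℂ W = N.rank := by
    rw [rank_eq_finrank_span_cols]
    exact LinearEquiv.finrank_map_eq _ _
  have hcol (j : Fin b) : col j ∈ W := Submodule.mem_map_of_mem (Submodule.subset_span ⟨j, rfl⟩)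
  let e := (stdOrthonormalBasis ℂ W).reindex (finCongr hW)
  let u (i : Fin N.rank) : EuclideanSpace ℂ (Fin a) := e i
  have hu : Orthonormal ℂ u := e.orthonormal.comp_linearIsometry W.subtypeₗᵢ
  refine ⟨u, fun i => WithLp.toLp 2 fun j => inner ℂ (u i) (col j), fun i => hu.1 i, ?_, ?_⟩
  · ext k j
    have := congrArg (fun y : W => (y : EuclideanSpace ℂ (Fin a)) k) (e.sum_repr' ⟨col j, hcol j⟩)
    simpa [u, col, vecMulVec_apply, Matrix.sum_apply, mul_comm] using this.symm
  · calc ∑ i, ‖(WithLp.toLp 2 fun j => inner ℂ (u i) (col j) : EuclideanSpace ℂ (Fin b))‖ ^ 2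
        = ∑ j, ∑ i, ‖inner ℂ (u i) (col j)‖ ^ 2 := by
          simp only [EuclideanSpace.norm_sq_eq]
          exact Finset.sum_comm
      _ ≤ ∑ j, ‖col j‖ ^ 2 := Finset.sum_le_sum fun j _ => hu.sum_inner_products_le _
      _ = mNormSq N := by
          rw [mNormSq_eq_sum, Finset.sum_comm]
          simp [col, EuclideanSpace.norm_sq_eq]

theorem norm_mInner_vecMulVec_le {Ω : Matrix (Fin a) (Fin b) ℂ} {u : EuclideanSpace ℂ (Fin a)}
    {μ : ℝ} (hμ : ∀ v : EuclideanSpace ℂ (Fin b), ‖v‖ = 1 → ‖mInner Ω (vecMulVec u v)‖ ≤ μ)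
    (v : EuclideanSpace ℂ (Fin b)) : ‖mInner Ω (vecMulVec u v)‖ ≤ μ * ‖v‖ := by
  rcases eq_or_ne v 0 with rfl | hv
  · simp [mInner, vecMulVec_apply]
  have hv' : ‖v‖ ≠ 0 := norm_ne_zero_iff.2 hv
  set w := (‖v‖⁻¹ : ℂ) • v
  have hvw : v = (‖v‖ : ℂ) • w := by
    rw [smul_smul, mul_inv_cancel₀ (by exact_mod_cast hv'), one_smul]
  have hw : ‖w‖ = 1 := by simp [w, norm_smul, hv']
  calc ‖mInner Ω (vecMulVec u v)‖ = ‖v‖ * ‖mInner Ω (vecMulVec u w)‖ := by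
        conv_lhs => rw [hvw]
        rw [WithLp.ofLp_smul, vecMulVec_smul, mInner_smul_right, norm_mul, Complex.norm_real,
          norm_norm]
    _ ≤ ‖v‖ * μ := by gcongr; exact hμ w hw
    _ = μ * ‖v‖ := mul_comm _ _

theorem norm_mInner_le_of_rank_le {Ω N : Matrix (Fin a) (Fin b) ℂ} {μ : ℝ} (hμ0 : 0 ≤ μ)
    (hμ : ∀ (u : EuclideanSpace ℂ (Fin a)) (v : EuclideanSpace ℂ (Fin b)), ‖u‖ = 1 → ‖v‖ = 1 →
      ‖mInner Ω (vecMulVec u v)‖ ≤ μ)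
    {r : ℕ} (hr : N.rank ≤ r) : ‖mInner Ω N‖ ≤ μ * √(r * mNormSq N) := by
  obtain ⟨u, x, hu, hN, hx⟩ := exists_eq_sum_vecMulVec N
  have hCS : ∑ i, ‖x i‖ ≤ √(r * mNormSq N) := by
    refine Real.le_sqrt_of_sq_le ?_
    calc (∑ i, ‖x i‖) ^ 2 ≤ N.rank * ∑ i, ‖x i‖ ^ 2 := by
          simpa using sq_sum_le_card_mul_sum_sq (s := Finset.univ) (f := fun i => ‖x i‖)
      _ ≤ r * mNormSq N := by gcongr
  calc ‖mInner Ω N‖ = ‖∑ i, mInner Ω (vecMulVec (u i) (x i))‖ := by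
        rw [← mInner_sum_right, ← hN]
    _ ≤ ∑ i, ‖mInner Ω (vecMulVec (u i) (x i))‖ := norm_sum_le _ _
    _ ≤ ∑ i, μ * ‖x i‖ :=
        Finset.sum_le_sum fun i _ => norm_mInner_vecMulVec_le (fun v hv => hμ _ _ (hu i) hv) _
    _ = μ * ∑ i, ‖x i‖ := (Finset.mul_sum _ _ _).symm
    _ ≤ μ * √(r * mNormSq N) := by gcongr

theorem mNormSq_smul_add_of_mInner_eq_zero {Ω x : Matrix (Fin a) (Fin b) ℂ}
    (hΩ : mInner Ω Ω = 1) (hx : mInner Ω x = 0) (c : ℂ) :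
    mNormSq (c • Ω + x) = ‖c‖ ^ 2 + mNormSq x := by
  have horth : inner ℂ (toEuclidean (c • Ω)) (toEuclidean x) = 0 := by
    rw [map_smul, inner_smul_left, ← mInner_eq_inner, hx, mul_zero]
  have hΩ' : ‖toEuclidean Ω‖ ^ 2 = 1 := by rw [← mNormSq_eq_norm_sq, mNormSq, hΩ, Complex.one_re]
  rw [mNormSq_eq_norm_sq, mNormSq_eq_norm_sq, map_add, sq, sq,
    norm_add_sq_eq_norm_sq_add_norm_sq_of_inner_eq_zero _ _ horth, map_smul, norm_smul]
  linear_combination ‖c‖ ^ 2 * hΩ'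

theorem exists_max_norm_mInner_vecMulVec [Nonempty (Fin a)] [Nonempty (Fin b)]
    (Ω : Matrix (Fin a) (Fin b) ℂ) :
    ∃ (u : EuclideanSpace ℂ (Fin a)) (v : EuclideanSpace ℂ (Fin b)), ‖u‖ = 1 ∧ ‖v‖ = 1 ∧
      ∀ (u' : EuclideanSpace ℂ (Fin a)) (v' : EuclideanSpace ℂ (Fin b)), ‖u'‖ = 1 → ‖v'‖ = 1 →
        ‖mInner Ω (vecMulVec u' v')‖ ≤ ‖mInner Ω (vecMulVec u v)‖ := by
  have hcont : Continuous fun p : EuclideanSpace ℂ (Fin a) × EuclideanSpace ℂ (Fin b) =>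
      ‖mInner Ω (vecMulVec p.1 p.2)‖ := by
    simp only [mInner, vecMulVec_apply]
    fun_prop
  obtain ⟨⟨u, v⟩, ⟨hu, hv⟩, hmax⟩ := ((isCompact_sphere (0 : EuclideanSpace ℂ (Fin a)) 1).prod
    (isCompact_sphere (0 : EuclideanSpace ℂ (Fin b)) 1)).exists_isMaxOn
    ((NormedSpace.sphere_nonempty.2 zero_le_one).prod (NormedSpace.sphere_nonempty.2 zero_le_one))
    hcont.continuousOn
  rw [mem_sphere_zero_iff_norm] at hu hv
  exact ⟨u, v, hu, hv, fun u' v' hu' hv' => isMaxOn_iff.1 hmax (u', v')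
    ⟨mem_sphere_zero_iff_norm.2 hu', mem_sphere_zero_iff_norm.2 hv'⟩⟩

theorem mInner_map_eq_and_mNormSq_map_le {Ω : Matrix (Fin a) (Fin b) ℂ} (hΩ : mInner Ω Ω = 1)
    {K : Matrix (Fin a) (Fin b) ℂ →ₗ[ℂ] Matrix (Fin a) (Fin b) ℂ} {Δ : ℝ} (hK1 : K Ω = Ω)
    (hK2 : ∀ v, mInner Ω v = 0 → mInner Ω (K v) = 0 ∧ mNormSq (K v) ≤ Δ * mNormSq v)
    (hΔ : 0 ≤ Δ) {φ : Matrix (Fin a) (Fin b) ℂ} (hφ : mNormSq φ = 1) :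
    mInner Ω (K φ) = mInner Ω φ ∧ mNormSq (K φ) ≤ ‖mInner Ω φ‖ ^ 2 + Δ := by
  set c := mInner Ω φ
  set w := φ - c • Ω
  have hw : mInner Ω w = 0 := by rw [mInner_sub_right, mInner_smul_right, hΩ, mul_one, sub_self]
  have hφw : φ = c • Ω + w := (add_sub_cancel _ _).symm
  have hKφ : K φ = c • Ω + K w := by rw [hφw, map_add, map_smul, hK1]
  obtain ⟨hKw, hKw_le⟩ := hK2 w hw
  have hw_le : mNormSq w ≤ 1 := by
    rw [← hφ, hφw, mNormSq_smul_add_of_mInner_eq_zero hΩ hw]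
    linarith [sq_nonneg ‖c‖]
  refine ⟨by rw [hKφ, mInner_add_right, mInner_smul_right, hΩ, hKw, mul_one, add_zero], ?_⟩
  rw [hKφ, mNormSq_smul_add_of_mInner_eq_zero hΩ hKw]
  nlinarith

theorem one_div_sqrt_two_mul_le {D : ℕ} {Δ μ S : ℝ} (hμ : 0 < μ) (hS : S ≤ μ ^ 2 + Δ)
    (hDΔ : (D : ℝ) * Δ ≤ 1 / 2) (h : μ ≤ μ * √(D * S)) : 1 / √(2 * D) ≤ μ := by
  have hDS : 1 ≤ D * S := Real.one_le_sqrt.1 (le_of_mul_le_mul_left (by simpa using h) hμ)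
  have hDμ : 1 ≤ 2 * D * μ ^ 2 := by nlinarith [Nat.cast_nonneg (α := ℝ) D]
  have hD : (0 : ℝ) < 2 * D := by
    by_contra! hD
    nlinarith [sq_nonneg μ]
  rw [div_le_iff₀ (Real.sqrt_pos.2 hD), ← Real.sqrt_sq hμ.le, ← Real.sqrt_mul (sq_nonneg μ)]
  exact Real.one_le_sqrt.2 (by linarith)

end AGSP

open AGSP in
theorem exists_product_state_overlap_general {a b : ℕ} (D : ℕ) (Δ : ℝ)
    (Ω : Matrix (Fin a) (Fin b) ℂ) (hΩ : mInner Ω Ω = 1)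
    (K : Matrix (Fin a) (Fin b) ℂ →ₗ[ℂ] Matrix (Fin a) (Fin b) ℂ)
    -- ground space invariance
    (hK1 : K Ω = Ω)
    -- shrinking: `K` preserves `Ω^⊥` and shrinks norms-squared there by `Δ`
    (hK2 : ∀ v, mInner Ω v = 0 → mInner Ω (K v) = 0 ∧ mNormSq (K v) ≤ Δ * mNormSq v)
    -- entangling: `K` increases Schmidt rank by a factor of at most `D`
    (hK3 : ∀ φ : Matrix (Fin a) (Fin b) ℂ, (K φ).rank ≤ D * φ.rank)
    (hΔ : 0 ≤ Δ) (hDΔ : (D : ℝ) * Δ ≤ 1 / 2) :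
    ∃ (L : Fin a → ℂ) (R : Fin b → ℂ),
      mInner (Matrix.vecMulVec L R) (Matrix.vecMulVec L R) = 1 ∧
      1 / Real.sqrt (2 * D) ≤ ‖mInner Ω (Matrix.vecMulVec L R)‖ := by
  obtain ⟨_, _⟩ := nonempty_fin_of_mInner_self_eq_one hΩ
  obtain ⟨u, v, hu, hv, hmax⟩ := exists_max_norm_mInner_vecMulVec Ω
  set μ := ‖mInner Ω (vecMulVec u v)‖
  have hφ : mInner (vecMulVec u v) (vecMulVec u v) = 1 := by simp [mInner_vecMulVec_self, hu, hv]
  have hμ : 0 < μ := by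
    have := norm_mInner_le_of_rank_le (norm_nonneg _) hmax le_rfl (N := Ω)
    refine (norm_nonneg _).lt_of_ne' fun hμ0 => ?_
    rw [hΩ, hμ0] at this
    norm_num at this
  obtain ⟨hKφ, hKφ_le⟩ := mInner_map_eq_and_mNormSq_map_le hΩ hK1 hK2 hΔ (φ := vecMulVec u v)
    (by rw [mNormSq, hφ, Complex.one_re])
  have hrank : (K (vecMulVec u v)).rank ≤ D := by
    simpa using (hK3 _).trans (Nat.mul_le_mul_left D (rank_vecMulVec_le _ _))
  have hoverlap := norm_mInner_le_of_rank_le (norm_nonneg _) hmax hrank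
  rw [hKφ] at hoverlap
  exact ⟨u, v, hφ, one_div_sqrt_two_mul_le hμ hKφ_le hDΔ hoverlap⟩

/-- If `K` is a `(D, Δ)`-approximate ground-space projection for the unique
(normalized) ground state `Ω` with `D·Δ ≤ 1/2`, then there is a normalized
product state `φ = L ⊗ R` with `|⟨Ω, φ⟩| ≥ 1/√(2D)`. -/
theorem exists_product_state_overlap {a b : ℕ} (D : ℕ) (Δ : ℝ)
    (Ω : Matrix (Fin a) (Fin b) ℂ) (hΩ : mInner Ω Ω = 1)
    (K : Matrix (Fin a) (Fin b) ℂ →ₗ[ℂ] Matrix (Fin a) (Fin b) ℂ)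
    -- ground space invariance
    (hK1 : K Ω = Ω)
    -- shrinking: `K` preserves `Ω^⊥` and shrinks norms-squared there by `Δ`
    (hK2 : ∀ v, mInner Ω v = 0 → mInner Ω (K v) = 0 ∧ mNormSq (K v) ≤ Δ * mNormSq v)
    -- entangling: `K` increases Schmidt rank by a factor of at most `D`
    (hK3 : ∀ φ : Matrix (Fin a) (Fin b) ℂ, (K φ).rank ≤ D * φ.rank)
    (hD : 1 ≤ D) (hΔ : 0 ≤ Δ) (hDΔ : (D : ℝ) * Δ ≤ 1 / 2) :
    ∃ (L : Fin a → ℂ) (R : Fin b → ℂ),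
      mInner (Matrix.vecMulVec L R) (Matrix.vecMulVec L R) = 1 ∧
      1 / Real.sqrt (2 * D) ≤ ‖mInner Ω (Matrix.vecMulVec L R)‖ :=
  exists_product_state_overlap_general D Δ Ω hΩ K hK1 hK2 hK3 hΔ hDΔ
end

section
/- Suppose there exists a product state φ with |⟨Ω, φ⟩| ≥ μ > 0, and a (D,Δ)-AGSP K with Δ < 1. Then for every ℓ ≥ 0, the Schmidt coefficients λ_1 ≥ λ_2 ≥ … of the ground state Ω satisfy Σ_{i > D^ℓ} λ_i^2 ≤ Δ^ℓ / μ^2. -/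
/-!
Write `φ = c Ω + u` with `u ⊥ Ω`. Each application of the AGSP keeps `c Ω`, keeps `u` orthogonal
to `Ω` while shrinking `‖u‖²` by `Δ`, and multiplies the Schmidt rank by at most `D`; so
`ψ = K^ℓ φ` has rank at most `D^ℓ`, overlap `c` with `Ω`, and `‖ψ‖² ≤ |c|² + Δ^ℓ (1 - |c|²)`.
The Eckart–Young bound `|⟨Ω, ψ⟩|² ≤ ‖ψ‖² Σ_{i ≤ D^ℓ} λ_i²` then rearranges, using
`Σ λ_i² = 1`, to `|c|² Σ_{i > D^ℓ} λ_i² ≤ Δ^ℓ`.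
-/

open Finset WithLp Matrix
open scoped InnerProductSpace

theorem sum_mul_le_sum_of_threshold {ι : Type*} [Fintype ι] (S : Finset ι)
    (w t : ι → ℝ) (c : ℝ) (hc : 0 ≤ c) (hS : ∀ j ∈ S, c ≤ w j) (hSc : ∀ j ∉ S, w j ≤ c)
    (ht₀ : ∀ j, 0 ≤ t j) (ht₁ : ∀ j, t j ≤ 1) (hsum : ∑ j, t j ≤ #S) :
    ∑ j, w j * t j ≤ ∑ j ∈ S, w j := by
  classical
  have hpt : ∀ j, w j * t j ≤
      (if j ∈ S then w j else 0) + c * (t j - if j ∈ S then 1 else 0) := by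
    intro j
    by_cases hj : j ∈ S
    · simp only [hj, if_true]; nlinarith [hS j hj, ht₁ j]
    · simp only [hj, if_false]; nlinarith [hSc j hj, ht₀ j]
  calc ∑ j, w j * t j
      ≤ ∑ j, ((if j ∈ S then w j else 0) + c * (t j - if j ∈ S then 1 else 0)) :=
        sum_le_sum fun j _ => hpt j
    _ = ∑ j ∈ S, w j + c * (∑ j, t j - #S) := by
        simp [sum_add_distrib, ← mul_sum, sum_sub_distrib, sum_ite_mem]
    _ ≤ ∑ j ∈ S, w j := by nlinarith

theorem Fin.sum_mul_le_sum_lt_of_antitone {s : ℕ} (r : ℕ) {w : Fin s → ℝ} (t : Fin s → ℝ)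
    (hw : Antitone w) (hw₀ : ∀ j, 0 ≤ w j) (ht₀ : ∀ j, 0 ≤ t j) (ht₁ : ∀ j, t j ≤ 1)
    (hsum : ∑ j, t j ≤ r) :
    ∑ j, w j * t j ≤ ∑ j : Fin s, if (j : ℕ) < r then w j else 0 := by
  rw [← sum_filter]
  have hcard : ∑ j, t j ≤ #{j : Fin s | (j : ℕ) < r} := by
    have : ∑ j, t j ≤ s := by simpa using sum_le_sum fun j (_ : j ∈ univ) => ht₁ j
    rw [Fin.card_filter_val_lt, Nat.cast_min]
    exact le_min this hsum
  by_cases hr : r < s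
  · refine sum_mul_le_sum_of_threshold _ w t (w ⟨r, hr⟩) (hw₀ _) ?_ ?_ ht₀ ht₁ hcard
    · exact fun j hj => hw (Fin.le_def.mpr (mem_filter.mp hj).2.le)
    · exact fun j hj => hw (Fin.le_def.mpr (not_lt.mp fun h => hj (mem_filter.mpr ⟨mem_univ j, h⟩)))
  · refine sum_mul_le_sum_of_threshold _ w t 0 le_rfl (fun j _ => hw₀ j) ?_ ht₀ ht₁ hcard
    exact fun j hj => absurd (mem_filter.mpr ⟨mem_univ j, by omega⟩) hj

section InnerProductSpace

variable {𝕜 E : Type*} [RCLike 𝕜] [NormedAddCommGroup E] [InnerProductSpace 𝕜 E]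

theorem OrthonormalBasis.norm_starProjection_sq {ι : Type*} [Fintype ι] {W : Submodule 𝕜 E}
    [W.HasOrthogonalProjection] (b : OrthonormalBasis ι 𝕜 W) (x : E) :
    ‖W.starProjection x‖ ^ 2 = ∑ k, ‖⟪(b k : E), x⟫_𝕜‖ ^ 2 := by
  rw [Submodule.starProjection_apply, Submodule.norm_coe, ← b.sum_sq_norm_inner_right]
  simp_rw [Submodule.inner_orthogonalProjectionOnto_eq_of_mem_left]

theorem Orthonormal.sum_norm_starProjection_sq_le {ι : Type*} [Fintype ι] {x : ι → E}
    (hx : Orthonormal 𝕜 x) (W : Submodule 𝕜 E) [FiniteDimensional 𝕜 W] :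
    ∑ j, ‖W.starProjection (x j)‖ ^ 2 ≤ Module.finrank 𝕜 W := by
  let b := stdOrthonormalBasis 𝕜 W
  calc ∑ j, ‖W.starProjection (x j)‖ ^ 2
      = ∑ k, ∑ j, ‖⟪x j, (b k : E)⟫_𝕜‖ ^ 2 := by
        simp_rw [b.norm_starProjection_sq, norm_inner_symm]
        exact sum_comm
    _ ≤ ∑ k, ‖(b k : E)‖ ^ 2 := sum_le_sum fun k _ => hx.sum_inner_products_le _
    _ = Module.finrank 𝕜 W := by simp [Submodule.norm_coe, b.orthonormal.1]

theorem inner_pow_apply_eq_zero_and_norm_sq_le {K : E →ₗ[𝕜] E} {Ω v : E} {Δ : ℝ} (hΔ : 0 ≤ Δ)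
    (hK : ∀ v, ⟪Ω, v⟫_𝕜 = 0 → ⟪Ω, K v⟫_𝕜 = 0 ∧ ‖K v‖ ^ 2 ≤ Δ * ‖v‖ ^ 2)
    (hv : ⟪Ω, v⟫_𝕜 = 0) (ℓ : ℕ) :
    ⟪Ω, (K ^ ℓ) v⟫_𝕜 = 0 ∧ ‖(K ^ ℓ) v‖ ^ 2 ≤ Δ ^ ℓ * ‖v‖ ^ 2 := by
  induction ℓ with
  | zero => simpa using hv
  | succ ℓ ih =>
    obtain ⟨h₁, h₂⟩ := hK _ ih.1
    rw [pow_succ' K, Module.End.mul_apply]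
    refine ⟨h₁, h₂.trans ?_⟩
    calc Δ * ‖(K ^ ℓ) v‖ ^ 2 ≤ Δ * (Δ ^ ℓ * ‖v‖ ^ 2) := mul_le_mul_of_nonneg_left ih.2 hΔ
      _ = Δ ^ (ℓ + 1) * ‖v‖ ^ 2 := by ring

theorem inner_pow_apply_eq_and_norm_sq_le {K : E →ₗ[𝕜] E} {Ω φ : E} {Δ : ℝ} (hΔ : 0 ≤ Δ)
    (hΩ : ‖Ω‖ = 1) (hφ : ‖φ‖ = 1) (hKΩ : K Ω = Ω)
    (hK : ∀ v, ⟪Ω, v⟫_𝕜 = 0 → ⟪Ω, K v⟫_𝕜 = 0 ∧ ‖K v‖ ^ 2 ≤ Δ * ‖v‖ ^ 2) (ℓ : ℕ) :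
    ⟪Ω, (K ^ ℓ) φ⟫_𝕜 = ⟪Ω, φ⟫_𝕜 ∧
      ‖(K ^ ℓ) φ‖ ^ 2 ≤ ‖⟪Ω, φ⟫_𝕜‖ ^ 2 + Δ ^ ℓ * (1 - ‖⟪Ω, φ⟫_𝕜‖ ^ 2) := by
  set c := ⟪Ω, φ⟫_𝕜
  set u := φ - c • Ω
  have hΩΩ : ⟪Ω, Ω⟫_𝕜 = 1 := by simp [inner_self_eq_norm_sq_to_K, hΩ]
  have hu : ⟪Ω, u⟫_𝕜 = 0 := by simp [u, inner_sub_right, inner_smul_right, hΩ, c]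
  have hφu : φ = c • Ω + u := by simp [u]
  have pythagoras : ∀ w, ⟪Ω, w⟫_𝕜 = 0 → ‖c • Ω + w‖ ^ 2 = ‖c‖ ^ 2 + ‖w‖ ^ 2 := fun w hw => by
    rw [@norm_add_sq 𝕜, inner_smul_left, hw, mul_zero, map_zero, mul_zero, add_zero, norm_smul,
      hΩ, mul_one]
  have hnorm_u : ‖u‖ ^ 2 = 1 - ‖c‖ ^ 2 := by
    have := pythagoras u hu
    rw [← hφu, hφ] at this
    linarith
  obtain ⟨hKu, hKu_norm⟩ := inner_pow_apply_eq_zero_and_norm_sq_le hΔ hK hu ℓ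
  have hKφ : (K ^ ℓ) φ = c • Ω + (K ^ ℓ) u := by
    rw [hφu, map_add, map_smul, Module.End.pow_apply, Function.iterate_fixed hKΩ]
  rw [hKφ, pythagoras _ hKu, inner_add_right, inner_smul_right, hΩΩ, hKu, ← hnorm_u]
  exact ⟨by ring, by linarith⟩

theorem orthonormal_toLp_iff {n ι : Type*} [Fintype n] [DecidableEq ι] {v : ι → n → 𝕜} :
    Orthonormal 𝕜 (fun j => toLp 2 (v j)) ↔
      ∀ j k, ∑ i, star (v j i) * v k i = if j = k then 1 else 0 := by
  simp only [orthonormal_iff_ite, EuclideanSpace.inner_toLp_toLp, dotProduct, Pi.star_apply,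
    mul_comm]

end InnerProductSpace

namespace Matrix

variable {𝕜 m n : Type*} [RCLike 𝕜] [Fintype m] [Fintype n]

/-- The Frobenius (Hilbert–Schmidt) inner product on matrices, realised by flattening. -/
noncomputable def toEuclideanProd : Matrix m n 𝕜 ≃ₗ[𝕜] EuclideanSpace 𝕜 (m × n) :=
  (ofLinearEquiv 𝕜).symm ≪≫ₗ (LinearEquiv.curry 𝕜 𝕜 m n).symm ≪≫ₗ
    (WithLp.linearEquiv 2 𝕜 (m × n → 𝕜)).symm

theorem inner_toEuclideanProd (M N : Matrix m n 𝕜) :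
    ⟪toEuclideanProd M, toEuclideanProd N⟫_𝕜 = ∑ i, ∑ k, star (M i k) * N i k := by
  simp [toEuclideanProd, EuclideanSpace.inner_toLp_toLp, dotProduct, Fintype.sum_prod_type,
    mul_comm]

theorem norm_toEuclideanProd_sq (M : Matrix m n 𝕜) :
    ‖toEuclideanProd M‖ ^ 2 = ∑ i, ‖toLp 2 (M i)‖ ^ 2 := by
  simp [toEuclideanProd, EuclideanSpace.norm_sq_eq, Fintype.sum_prod_type]

theorem inner_toEuclideanProd_vecMulVec_left (u : m → 𝕜) (v : n → 𝕜) (ψ : Matrix m n 𝕜) :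
    ⟪toEuclideanProd (vecMulVec u v), toEuclideanProd ψ⟫_𝕜 =
      ⟪toLp 2 u, toLp 2 (ψ *ᵥ star v)⟫_𝕜 := by
  simp only [inner_toEuclideanProd, EuclideanSpace.inner_toLp_toLp, dotProduct, mulVec,
    vecMulVec_apply, star_mul', Pi.star_apply, sum_mul]
  exact sum_congr rfl fun i _ => sum_congr rfl fun k _ => by ring

theorem inner_toEuclideanProd_vecMulVec (u u' : m → 𝕜) (v v' : n → 𝕜) :
    ⟪toEuclideanProd (vecMulVec u v), toEuclideanProd (vecMulVec u' v')⟫_𝕜 =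
      ⟪toLp 2 u, toLp 2 u'⟫_𝕜 * ⟪toLp 2 v, toLp 2 v'⟫_𝕜 := by
  simp [inner_toEuclideanProd, EuclideanSpace.inner_toLp_toLp, dotProduct, vecMulVec_apply,
    sum_mul_sum, star_mul']
  exact sum_congr rfl fun i _ => sum_congr rfl fun k _ => by ring

theorem sum_norm_mulVec_star_sq_le {ι : Type*} [Fintype ι] (ψ : Matrix m n 𝕜) {y : ι → n → 𝕜}
    (hy : Orthonormal 𝕜 fun j => toLp 2 (y j)) :
    ∑ j, ‖toLp 2 (ψ *ᵥ star (y j))‖ ^ 2 ≤ ‖toEuclideanProd ψ‖ ^ 2 := by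
  have hentry : ∀ j i, (ψ *ᵥ star (y j)) i = ⟪toLp 2 (y j), toLp 2 (ψ i)⟫_𝕜 := fun j i => by
    simp [mulVec, EuclideanSpace.inner_toLp_toLp]
  calc ∑ j, ‖toLp 2 (ψ *ᵥ star (y j))‖ ^ 2
      = ∑ i, ∑ j, ‖⟪toLp 2 (y j), toLp 2 (ψ i)⟫_𝕜‖ ^ 2 := by
        simp_rw [EuclideanSpace.norm_sq_eq, hentry]
        exact sum_comm
    _ ≤ ∑ i, ‖toLp 2 (ψ i)‖ ^ 2 := sum_le_sum fun i _ => hy.sum_inner_products_le _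
    _ = ‖toEuclideanProd ψ‖ ^ 2 := (norm_toEuclideanProd_sq ψ).symm

theorem orthonormal_toEuclideanProd_vecMulVec {ι : Type*} {L : ι → m → 𝕜} {R : ι → n → 𝕜}
    (hL : Orthonormal 𝕜 fun j => toLp 2 (L j)) (hR : Orthonormal 𝕜 fun j => toLp 2 (R j)) :
    Orthonormal 𝕜 fun j => toEuclideanProd (vecMulVec (L j) (R j)) := by
  classical
  rw [orthonormal_iff_ite] at *
  intro j k
  rw [inner_toEuclideanProd_vecMulVec, hL, hR]
  split_ifs <;> simp

theorem norm_toEuclideanProd_sum_smul_vecMulVec_sq {ι : Type*} [Fintype ι] (lam : ι → ℝ)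
    {L : ι → m → 𝕜} {R : ι → n → 𝕜}
    (hL : Orthonormal 𝕜 fun j => toLp 2 (L j)) (hR : Orthonormal 𝕜 fun j => toLp 2 (R j)) :
    ‖toEuclideanProd (∑ j, (lam j : 𝕜) • vecMulVec (L j) (R j))‖ ^ 2 = ∑ j, lam j ^ 2 := by
  rw [map_sum, ← @inner_self_eq_norm_sq 𝕜]
  simp_rw [map_smul]
  rw [(orthonormal_toEuclideanProd_vecMulVec hL hR).inner_sum]
  simp [sq]

/-- Eckart–Young: `ψ` only sees the projections of the `L j` onto its column space `W`, and these
projections carry total weight at most `dim W ≤ r`. -/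
theorem norm_inner_toEuclideanProd_sq_le_of_rank_le {s : ℕ} (r : ℕ) {lam : Fin s → ℝ}
    {L : Fin s → m → 𝕜} {R : Fin s → n → 𝕜}
    (hL : Orthonormal 𝕜 fun j => toLp 2 (L j)) (hR : Orthonormal 𝕜 fun j => toLp 2 (R j))
    (hlam₀ : ∀ j, 0 ≤ lam j) (hlam : Antitone lam) {ψ : Matrix m n 𝕜} (hψ : ψ.rank ≤ r) :
    ‖⟪toEuclideanProd (∑ j, (lam j : 𝕜) • vecMulVec (L j) (R j)), toEuclideanProd ψ⟫_𝕜‖ ^ 2 ≤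
      ‖toEuclideanProd ψ‖ ^ 2 * ∑ j : Fin s, if (j : ℕ) < r then lam j ^ 2 else 0 := by
  classical
  set W := LinearMap.range (toEuclideanLin ψ)
  set x := fun j => W.starProjection (toLp 2 (L j))
  set w := fun j => toLp 2 (ψ *ᵥ star (R j))
  have hw : ∀ j, w j ∈ W := fun j => ⟨toLp 2 (star (R j)), rfl⟩
  have hexpand : ⟪toEuclideanProd (∑ j, (lam j : 𝕜) • vecMulVec (L j) (R j)), toEuclideanProd ψ⟫_𝕜
      = ∑ j, (lam j : 𝕜) * ⟪x j, w j⟫_𝕜 := by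
    simp_rw [map_sum, map_smul, sum_inner, inner_smul_left, inner_toEuclideanProd_vecMulVec_left,
      RCLike.conj_ofReal, x, Submodule.inner_starProjection_left_eq_right,
      Submodule.starProjection_eq_self_iff.mpr (hw _)]
    rfl
  have hx : ∑ j, ‖x j‖ ^ 2 ≤ r := by
    refine (hL.sum_norm_starProjection_sq_le W).trans ?_
    rw [rank_eq_finrank_range_toLin ψ (EuclideanSpace.basisFun m 𝕜).toBasis
      (EuclideanSpace.basisFun n 𝕜).toBasis] at hψ
    exact_mod_cast hψ
  have hx_le_one : ∀ j, ‖x j‖ ^ 2 ≤ 1 := fun j => by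
    simpa [hL.1 j] using
      pow_le_pow_left₀ (norm_nonneg _) (W.norm_starProjection_apply_le (toLp 2 (L j))) 2
  calc ‖⟪toEuclideanProd (∑ j, (lam j : 𝕜) • vecMulVec (L j) (R j)), toEuclideanProd ψ⟫_𝕜‖ ^ 2
      ≤ (∑ j, lam j * ‖x j‖ * ‖w j‖) ^ 2 := by
        rw [hexpand]
        gcongr
        refine (norm_sum_le _ _).trans (sum_le_sum fun j _ => ?_)
        rw [norm_mul, RCLike.norm_ofReal, abs_of_nonneg (hlam₀ j), mul_assoc]
        exact mul_le_mul_of_nonneg_left (norm_inner_le_norm _ _) (hlam₀ j)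
    _ ≤ (∑ j, lam j ^ 2 * ‖x j‖ ^ 2) * ∑ j, ‖w j‖ ^ 2 := by
        simpa [mul_pow] using sum_mul_sq_le_sq_mul_sq univ (fun j => lam j * ‖x j‖) (fun j => ‖w j‖)
    _ ≤ (∑ j : Fin s, if (j : ℕ) < r then lam j ^ 2 else 0) * ‖toEuclideanProd ψ‖ ^ 2 := by
        gcongr ?_ * ?_
        · exact Fin.sum_mul_le_sum_lt_of_antitone r _
            (fun i j hij => pow_le_pow_left₀ (hlam₀ j) (hlam hij) 2) (fun j => sq_nonneg _)
            (fun j => sq_nonneg _) hx_le_one hx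
        · exact sum_norm_mulVec_star_sq_le ψ hR
    _ = _ := mul_comm _ _

end Matrix

theorem mInner_eq_inner {a b : ℕ} (M N : Matrix (Fin a) (Fin b) ℂ) :
    mInner M N = ⟪toEuclideanProd M, toEuclideanProd N⟫_ℂ :=
  (inner_toEuclideanProd M N).symm

theorem mNormSq_eq_norm_sq {a b : ℕ} (M : Matrix (Fin a) (Fin b) ℂ) :
    mNormSq M = ‖toEuclideanProd M‖ ^ 2 := by
  rw [mNormSq, mInner_eq_inner]
  exact (norm_sq_eq_re_inner (𝕜 := ℂ) _).symm

theorem norm_toEuclideanProd_eq_one {a b : ℕ} {M : Matrix (Fin a) (Fin b) ℂ}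
    (hM : mInner M M = 1) : ‖toEuclideanProd M‖ = 1 := by
  rw [← pow_eq_one_iff_of_nonneg (norm_nonneg _) two_ne_zero, ← mNormSq_eq_norm_sq, mNormSq, hM,
    Complex.one_re]

theorem mInner_pow_apply_eq_and_mNormSq_le {a b : ℕ} {K : Module.End ℂ (Matrix (Fin a) (Fin b) ℂ)}
    {Ω φ : Matrix (Fin a) (Fin b) ℂ} {Δ : ℝ} (hΔ : 0 ≤ Δ) (hΩ : mInner Ω Ω = 1)
    (hφ : mInner φ φ = 1) (hKΩ : K Ω = Ω)
    (hK : ∀ v, mInner Ω v = 0 → mInner Ω (K v) = 0 ∧ mNormSq (K v) ≤ Δ * mNormSq v) (ℓ : ℕ) :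
    mInner Ω ((K ^ ℓ) φ) = mInner Ω φ ∧
      mNormSq ((K ^ ℓ) φ) ≤ ‖mInner Ω φ‖ ^ 2 + Δ ^ ℓ * (1 - ‖mInner Ω φ‖ ^ 2) := by
  have h := inner_pow_apply_eq_and_norm_sq_le (K := toEuclideanProd.conjRingEquiv K) hΔ
    (norm_toEuclideanProd_eq_one hΩ) (norm_toEuclideanProd_eq_one hφ) (by simp [hKΩ])
    (fun v hv => by
      obtain ⟨M, rfl⟩ := toEuclideanProd.surjective v
      simpa [mInner_eq_inner, mNormSq_eq_norm_sq] using hK M (by simpa [mInner_eq_inner] using hv))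
    ℓ
  rw [← map_pow, LinearEquiv.conjRingEquiv_apply_apply, LinearEquiv.symm_apply_apply] at h
  simpa only [mInner_eq_inner, mNormSq_eq_norm_sq] using h

theorem rank_pow_apply_le {m n R : Type*} [Fintype n] [Field R] {D : ℕ}
    {K : Module.End R (Matrix m n R)} (hK : ∀ ψ, (K ψ).rank ≤ D * ψ.rank) (ℓ : ℕ)
    (ψ : Matrix m n R) : ((K ^ ℓ) ψ).rank ≤ D ^ ℓ * ψ.rank := by
  induction ℓ with
  | zero => simp
  | succ ℓ ih =>
    rw [pow_succ' K, Module.End.mul_apply, pow_succ', mul_assoc]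
    exact (hK _).trans (Nat.mul_le_mul_left D ih)

theorem mul_tail_le_of_sq_le_mul_head {c Δ head tail : ℝ} (hΔ : 0 ≤ Δ) (hhead : 0 ≤ head)
    (htail : 0 ≤ tail) (hsum : head + tail = 1) (h : c ^ 2 ≤ (c ^ 2 + Δ * (1 - c ^ 2)) * head) :
    c ^ 2 * tail ≤ Δ := by
  nlinarith [mul_nonneg (mul_nonneg hΔ (sq_nonneg c)) hhead, mul_nonneg hΔ htail]

theorem schmidt_tail_bound_general {a b s : ℕ} (D : ℕ) (Δ μ : ℝ)
    (Ω : Matrix (Fin a) (Fin b) ℂ) (hΩ : mInner Ω Ω = 1)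
    -- Schmidt decomposition of the ground state `Ω`
    (lam : Fin s → ℝ) (L : Fin s → (Fin a → ℂ)) (R : Fin s → (Fin b → ℂ))
    (hL : ∀ j k, ∑ i, star (L j i) * L k i = if j = k then (1 : ℂ) else 0)
    (hR : ∀ j k, ∑ i, star (R j i) * R k i = if j = k then (1 : ℂ) else 0)
    (hnonneg : ∀ j, 0 ≤ lam j)
    (hmono : ∀ j k : Fin s, j ≤ k → lam k ≤ lam j)
    (hdecomp : Ω = ∑ j, (lam j : ℂ) • Matrix.vecMulVec (L j) (R j))
    -- a product state with overlap at least `μ > 0` with the ground state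
    (hμ : 0 < μ)
    (φL : Fin a → ℂ) (φR : Fin b → ℂ)
    (hφ : mInner (Matrix.vecMulVec φL φR) (Matrix.vecMulVec φL φR) = 1)
    (hover : μ ≤ ‖mInner Ω (Matrix.vecMulVec φL φR)‖)
    -- a `(D,Δ)`-AGSP
    (K : Matrix (Fin a) (Fin b) ℂ →ₗ[ℂ] Matrix (Fin a) (Fin b) ℂ)
    (hK1 : K Ω = Ω)
    (hK2 : ∀ v, mInner Ω v = 0 → mInner Ω (K v) = 0 ∧ mNormSq (K v) ≤ Δ * mNormSq v)
    (hK3 : ∀ ψ : Matrix (Fin a) (Fin b) ℂ, (K ψ).rank ≤ D * ψ.rank)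
    (hΔ0 : 0 ≤ Δ) :
    ∀ ℓ : ℕ, (∑ j : Fin s, if D ^ ℓ ≤ (j : ℕ) then lam j ^ 2 else 0) ≤ Δ ^ ℓ / μ ^ 2 := by
  intro ℓ
  set φ := vecMulVec φL φR
  set ψ := (K ^ ℓ) φ
  set head := ∑ j : Fin s, if (j : ℕ) < D ^ ℓ then lam j ^ 2 else 0
  set tail := ∑ j : Fin s, if D ^ ℓ ≤ (j : ℕ) then lam j ^ 2 else 0
  have hhead : 0 ≤ head := sum_nonneg fun j _ => by positivity
  have htail : 0 ≤ tail := sum_nonneg fun j _ => by positivity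
  have hL' := orthonormal_toLp_iff.mpr hL
  have hR' := orthonormal_toLp_iff.mpr hR
  obtain ⟨hoverlap, hψ_norm⟩ := mInner_pow_apply_eq_and_mNormSq_le hΔ0 hΩ hφ hK1 hK2 ℓ
  have hrank : ψ.rank ≤ D ^ ℓ := (rank_pow_apply_le hK3 ℓ φ).trans <| by
    simpa using Nat.mul_le_mul_left (D ^ ℓ) (rank_vecMulVec_le φL φR)
  have heckart_young : ‖mInner Ω ψ‖ ^ 2 ≤ mNormSq ψ * head := by
    rw [mInner_eq_inner, mNormSq_eq_norm_sq, hdecomp]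
    exact norm_inner_toEuclideanProd_sq_le_of_rank_le _ hL' hR' hnonneg hmono hrank
  have htotal : ∑ j, lam j ^ 2 = 1 := by
    have h := norm_toEuclideanProd_sum_smul_vecMulVec_sq lam hL' hR'
    rwa [RCLike.ofReal_eq_complex_ofReal, ← hdecomp, norm_toEuclideanProd_eq_one hΩ, one_pow,
      eq_comm] at h
  have hsplit : head + tail = 1 := by
    simp_rw [head, tail, ← not_lt, ← sum_filter, sum_filter_add_sum_filter_not, htotal]
  have hc := mul_tail_le_of_sq_le_mul_head (pow_nonneg hΔ0 ℓ) hhead htail hsplit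
    (hoverlap ▸ heckart_young.trans (mul_le_mul_of_nonneg_right hψ_norm hhead))
  rw [le_div_iff₀ (by positivity), mul_comm]
  exact (mul_le_mul_of_nonneg_right (pow_le_pow_left₀ hμ.le hover 2) htail).trans hc

/-- If there is a normalized product state `φ` with `|⟨Ω, φ⟩| ≥ μ > 0` and a
`(D,Δ)`-AGSP `K` with `Δ < 1`, then for every `ℓ ≥ 0` the Schmidt coefficients
`λ_1 ≥ λ_2 ≥ …` of the ground state `Ω` satisfy `Σ_{i > D^ℓ} λ_i² ≤ Δ^ℓ/μ²`. -/
theorem schmidt_tail_bound {a b s : ℕ} (D : ℕ) (Δ μ : ℝ)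
    (Ω : Matrix (Fin a) (Fin b) ℂ) (hΩ : mInner Ω Ω = 1)
    -- Schmidt decomposition of the ground state `Ω`
    (lam : Fin s → ℝ) (L : Fin s → (Fin a → ℂ)) (R : Fin s → (Fin b → ℂ))
    (hL : ∀ j k, ∑ i, star (L j i) * L k i = if j = k then (1 : ℂ) else 0)
    (hR : ∀ j k, ∑ i, star (R j i) * R k i = if j = k then (1 : ℂ) else 0)
    (hnonneg : ∀ j, 0 ≤ lam j)
    (hmono : ∀ j k : Fin s, j ≤ k → lam k ≤ lam j)
    (hdecomp : Ω = ∑ j, (lam j : ℂ) • Matrix.vecMulVec (L j) (R j))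
    -- a product state with overlap at least `μ > 0` with the ground state
    (hμ : 0 < μ)
    (φL : Fin a → ℂ) (φR : Fin b → ℂ)
    (hφ : mInner (Matrix.vecMulVec φL φR) (Matrix.vecMulVec φL φR) = 1)
    (hover : μ ≤ ‖mInner Ω (Matrix.vecMulVec φL φR)‖)
    -- a `(D,Δ)`-AGSP
    (K : Matrix (Fin a) (Fin b) ℂ →ₗ[ℂ] Matrix (Fin a) (Fin b) ℂ)
    (hK1 : K Ω = Ω)
    (hK2 : ∀ v, mInner Ω v = 0 → mInner Ω (K v) = 0 ∧ mNormSq (K v) ≤ Δ * mNormSq v)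
    (hK3 : ∀ ψ : Matrix (Fin a) (Fin b) ℂ, (K ψ).rank ≤ D * ψ.rank)
    (hΔ0 : 0 ≤ Δ) (hΔ1 : Δ < 1) :
    ∀ ℓ : ℕ, (∑ j : Fin s, if D ^ ℓ ≤ (j : ℕ) then lam j ^ 2 else 0) ≤ Δ ^ ℓ / μ ^ 2 :=
  schmidt_tail_bound_general D Δ μ Ω hΩ lam L R hL hR hnonneg hmono hdecomp hμ φL φR hφ hover K hK1
    hK2 hK3 hΔ0
end

section
/- Let ℓ ≥ 1 and let n_1, …, n_ℓ be nonnegative integers with Σ_i n_i ≤ ℓ/2^k for some integer k ≥ 1. Then Π_{i=1}^ℓ (n_i + 1) ≤ 2^{ℓ/2^k}. Consequently, the product over all rounds k = 0, 1, 2, … of such factors is at most 4^ℓ. -/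
/-!
Since `n + 1 ≤ 2 ^ n` for every natural number `n`, a product `∏ (nᵢ + 1)` is at most
`2 ^ (∑ nᵢ)`, which handles each round. Over all rounds the exponents add up to at most
`∑ₖ ℓ / 2 ^ k ≤ 2ℓ`, giving `2 ^ (2ℓ) = 4 ^ ℓ`.
-/

open Finset

theorem natCast_add_one_le_two_pow (n : ℕ) : (n : ℝ) + 1 ≤ 2 ^ n := by
  exact_mod_cast Nat.lt_two_pow_self

theorem prod_natCast_add_one_le_two_rpow_sum {ι : Type*} (s : Finset ι) (n : ι → ℕ) :
    ∏ i ∈ s, ((n i : ℝ) + 1) ≤ (2 : ℝ) ^ (∑ i ∈ s, (n i : ℝ)) := by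
  rw [Real.rpow_sum_of_pos two_pos]
  gcongr with i
  rw [Real.rpow_natCast]
  exact natCast_add_one_le_two_pow (n i)

theorem prod_natCast_add_one_le_two_rpow {ι : Type*} {s : Finset ι} {n : ι → ℕ} {S : ℝ}
    (hS : ∑ i ∈ s, (n i : ℝ) ≤ S) : ∏ i ∈ s, ((n i : ℝ) + 1) ≤ (2 : ℝ) ^ S :=
  (prod_natCast_add_one_le_two_rpow_sum s n).trans (Real.rpow_le_rpow_of_exponent_le one_le_two hS)

theorem sum_range_div_two_pow_le {a : ℝ} (ha : 0 ≤ a) (K : ℕ) :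
    ∑ k ∈ range K, a / 2 ^ k ≤ 2 * a := by
  calc ∑ k ∈ range K, a / 2 ^ k = (∑ k ∈ range K, (1 / (2 : ℝ)) ^ k) * a := by
        rw [sum_mul]
        refine sum_congr rfl fun k _ => ?_
        rw [one_div_pow]
        ring
    _ ≤ 2 * a := by gcongr; exact sum_geometric_two_le K

theorem prod_succ_le_rounds_general (ℓ : ℕ) :
    (∀ (k : ℕ), 1 ≤ k → ∀ n : Fin ℓ → ℕ,
      (∑ i, (n i : ℝ)) ≤ (ℓ : ℝ) / 2 ^ k →
      (∏ i, ((n i : ℝ) + 1)) ≤ (2 : ℝ) ^ ((ℓ : ℝ) / 2 ^ k)) ∧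
    (∀ (K : ℕ) (n : ℕ → Fin ℓ → ℕ),
      (∀ k, (∑ i, (n k i : ℝ)) ≤ (ℓ : ℝ) / 2 ^ k) →
      (∏ k ∈ Finset.range K, ∏ i, ((n k i : ℝ) + 1)) ≤ (4 : ℝ) ^ ℓ) := by
  refine ⟨fun k _ n => prod_natCast_add_one_le_two_rpow, fun K n hn => ?_⟩
  have hrounds : ∑ k ∈ range K, ∑ i, (n k i : ℝ) ≤ ((2 * ℓ : ℕ) : ℝ) := by
    push_cast
    exact (sum_le_sum fun k _ => hn k).trans (sum_range_div_two_pow_le ℓ.cast_nonneg K)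
  calc ∏ k ∈ range K, ∏ i, ((n k i : ℝ) + 1)
      = ∏ p ∈ range K ×ˢ univ, ((n p.1 p.2 : ℝ) + 1) := (prod_product' _ _ _).symm
    _ ≤ (2 : ℝ) ^ ((2 * ℓ : ℕ) : ℝ) :=
        prod_natCast_add_one_le_two_rpow ((sum_product' _ _ _).trans_le hrounds)
    _ = 4 ^ ℓ := by rw [Real.rpow_natCast, pow_mul]; norm_num

/-- If `ℓ ≥ 1` and nonnegative integers `n_1, …, n_ℓ` satisfy
`Σ_i n_i ≤ ℓ/2^k` for some `k ≥ 1`, then `Π_i (n_i + 1) ≤ 2^{ℓ/2^k}`.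
Consequently, the product over all rounds `k = 0, 1, 2, …` of such
factors is at most `4^ℓ`. -/
theorem prod_succ_le_rounds (ℓ : ℕ) (hℓ : 1 ≤ ℓ) :
    (∀ (k : ℕ), 1 ≤ k → ∀ n : Fin ℓ → ℕ,
      (∑ i, (n i : ℝ)) ≤ (ℓ : ℝ) / 2 ^ k →
      (∏ i, ((n i : ℝ) + 1)) ≤ (2 : ℝ) ^ ((ℓ : ℝ) / 2 ^ k)) ∧
    (∀ (K : ℕ) (n : ℕ → Fin ℓ → ℕ),
      (∀ k, (∑ i, (n k i : ℝ)) ≤ (ℓ : ℝ) / 2 ^ k) →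
      (∏ k ∈ Finset.range K, ∏ i, ((n k i : ℝ) + 1)) ≤ (4 : ℝ) ^ ℓ) :=
  prod_succ_le_rounds_general ℓ
end

section
/- Let P_1, …, P_m be commuting orthogonal projections, N = Σ_i (1 - P_i), and let p be a polynomial with p(0) = 1 and |p(x)| ≤ δ for all integers 1 ≤ x ≤ m. Then the operator p(N) acts as the identity on the joint ground space ∩_i ran(P_i), and for every vector ψ orthogonal to this joint ground space (within the span of the violating sectors), ‖p(N)ψ‖ ≤ δ‖ψ‖. -/
open Module

variable {H : Type*} [NormedAddCommGroup H] [InnerProductSpace ℂ H] [FiniteDimensional ℂ H]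

/-- The sector labelled by a string `s ∈ {0,1}^m`: the joint eigenspace on which
each `P i` acts as multiplication by `1 - s i` (so `s i = true` is a violation). -/
noncomputable def sector {m : ℕ} (P : Fin m → (H →ₗ[ℂ] H)) (s : Fin m → Bool) :
    Submodule ℂ H :=
  ⨅ i : Fin m, Module.End.eigenspace (P i) (if s i then (0 : ℂ) else 1)

/-!
On the sector `s`, `N = Σ_i (1 - P_i)` acts as the number of violations of `s`, so `p(N)` acts
as the scalar `p(#violations)`. Eigenspaces of the symmetric `P_i` for the eigenvalues `0` and `1`
are orthogonal, hence so are distinct sectors; by Pythagoras an operator acting on each member of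
an orthogonal family of subspaces as a scalar of modulus at most `δ` shrinks every vector of
their span by the factor `δ`. The ground space is the sector without violations, where `p(N)`
acts as `p(0) = 1`.
-/

section OrthogonalFamily

variable {𝕜 E ι : Type*} [RCLike 𝕜] [NormedAddCommGroup E] [InnerProductSpace 𝕜 E]
  {V : ι → Submodule 𝕜 E}

theorem OrthogonalFamily.norm_apply_le_of_forall_eq_smul
    (hV : OrthogonalFamily 𝕜 (fun i => V i) fun i => (V i).subtypeₗᵢ)
    {T : E →ₗ[𝕜] E} {c : ι → 𝕜} {δ : ℝ} (hT : ∀ i, ∀ v ∈ V i, T v = c i • v)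
    (hc : ∀ i, ‖c i‖ ≤ δ) {ψ : E} (hψ : ψ ∈ ⨆ i, V i) :
    ‖T ψ‖ ≤ δ * ‖ψ‖ := by
  obtain ⟨s, hs⟩ := Submodule.mem_iSup_iff_exists_finset.mp hψ
  obtain ⟨μ, rfl⟩ := (Submodule.mem_iSup_finset_iff_exists_sum V ψ).mp hs
  rcases isEmpty_or_nonempty ι with _ | ⟨⟨i₀⟩⟩
  · simp [Finset.eq_empty_of_isEmpty s]
  have hδ : 0 ≤ δ := (norm_nonneg _).trans (hc i₀)
  have hTμ : T (∑ i ∈ s, (μ i : E)) = ∑ i ∈ s, (V i).subtypeₗᵢ (c i • μ i) := by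
    simp [hT _ _ (μ _).2]
  have hsq : ‖T (∑ i ∈ s, (μ i : E))‖ ^ 2 ≤ (δ * ‖∑ i ∈ s, (μ i : E)‖) ^ 2 :=
    calc ‖T (∑ i ∈ s, (μ i : E))‖ ^ 2 = ∑ i ∈ s, ‖c i‖ ^ 2 * ‖μ i‖ ^ 2 := by
          simp only [hTμ, hV.norm_sum, norm_smul, mul_pow]
      _ ≤ ∑ i ∈ s, δ ^ 2 * ‖μ i‖ ^ 2 := by
          gcongr with i
          exact hc i
      _ = (δ * ‖∑ i ∈ s, (μ i : E)‖) ^ 2 := by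
          rw [mul_pow, ← Finset.mul_sum, ← hV.norm_sum μ s]
          rfl
  exact (pow_le_pow_iff_left₀ (norm_nonneg _) (by positivity) two_ne_zero).mp hsq

end OrthogonalFamily

def numViolations {m : ℕ} (s : Fin m → Bool) : ℕ :=
  (Finset.univ.filter (s · = true)).card

theorem numViolations_le {m : ℕ} (s : Fin m → Bool) : numViolations s ≤ m :=
  (Finset.card_filter_le _ _).trans (Finset.card_fin m).le

theorem one_le_numViolations {m : ℕ} {s : Fin m → Bool} (hs : s ≠ fun _ => false) :
    1 ≤ numViolations s := by
  obtain ⟨i, hi⟩ := Function.ne_iff.mp hs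
  exact Finset.card_pos.mpr ⟨i, by simpa using hi⟩

section Sector

variable {E : Type*} [NormedAddCommGroup E] [InnerProductSpace ℂ E] {m : ℕ}
  {P : Fin m → (E →ₗ[ℂ] E)}

theorem mem_sector_iff {s : Fin m → Bool} {v : E} :
    v ∈ sector P s ↔ ∀ i, P i v = (if s i then (0 : ℂ) else 1) • v := by
  simp only [sector, Submodule.mem_iInf, Module.End.mem_eigenspace_iff]

theorem sector_isOrtho (hsa : ∀ i, (P i).IsSymmetric) {s t : Fin m → Bool} (hst : s ≠ t) :
    sector P s ⟂ sector P t := by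
  obtain ⟨i, hi⟩ := Function.ne_iff.mp hst
  have hμ : (if s i then (0 : ℂ) else 1) ≠ if t i then 0 else 1 := by
    cases hs : s i <;> cases ht : t i <;> simp_all
  exact ((hsa i).orthogonalFamily_eigenspaces.isOrtho hμ).mono (iInf_le _ i) (iInf_le _ i)

theorem orthogonalFamily_sector (hsa : ∀ i, (P i).IsSymmetric) :
    OrthogonalFamily ℂ (fun s => sector P s) fun s => (sector P s).subtypeₗᵢ :=
  OrthogonalFamily.of_pairwise fun _ _ => sector_isOrtho hsa

theorem sum_id_sub_apply_of_mem_sector {s : Fin m → Bool} {v : E} (hv : v ∈ sector P s) :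
    (∑ i, (LinearMap.id - P i) : Module.End ℂ E) v = (numViolations s : ℂ) • v := by
  have hterm : ∀ i, v - P i v = (if s i then (1 : ℂ) else 0) • v := by
    intro i
    rw [mem_sector_iff.mp hv i]
    cases s i <;> simp
  simp only [LinearMap.sum_apply, LinearMap.sub_apply, LinearMap.id_apply, hterm,
    ← Finset.sum_smul, Finset.sum_boole, numViolations]

end Sector

theorem poly_of_N_shrinks_violating_sectors_general {m : ℕ} (P : Fin m → (H →ₗ[ℂ] H))
    (hsa : ∀ i, LinearMap.IsSymmetric (P i))
    (N : Module.End ℂ H) (hN : N = ∑ i, (LinearMap.id - P i))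
    (δ : ℝ) (p : Polynomial ℂ)
    (hp0 : p.eval 0 = 1)
    (hpδ : ∀ k : ℕ, 1 ≤ k → k ≤ m → ‖p.eval (k : ℂ)‖ ≤ δ) :
    (∀ ψ : H, (∀ i, P i ψ = ψ) → Polynomial.aeval N p ψ = ψ) ∧
    (∀ ψ : H,
      ψ ∈ (⨆ s ∈ {s : Fin m → Bool | s ≠ fun _ => false}, sector P s) →
      ‖Polynomial.aeval N p ψ‖ ≤ δ * ‖ψ‖) := by
  have haeval : ∀ s, ∀ v ∈ sector P s,
      Polynomial.aeval N p v = p.eval (numViolations s : ℂ) • v := fun _ _ hv =>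
    Module.End.aeval_apply_of_mem_apply_eq_smul (hN ▸ sum_id_sub_apply_of_mem_sector hv)
  refine ⟨fun ψ hψ => ?_, fun ψ hψ => ?_⟩
  · have hground : ψ ∈ sector P fun _ => false := mem_sector_iff.mpr (by simpa using hψ)
    simpa [numViolations, hp0] using haeval _ ψ hground
  · set violating := {s : Fin m → Bool | s ≠ fun _ => false}
    rw [← iSup_subtype''] at hψ
    have hfamily : OrthogonalFamily ℂ (fun s : violating => sector P s.1)
        fun s => (sector P s.1).subtypeₗᵢ :=
      (orthogonalFamily_sector hsa).comp Subtype.val_injective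
    exact hfamily.norm_apply_le_of_forall_eq_smul (fun s => haeval s)
      (fun s => hpδ _ (one_le_numViolations s.2) (numViolations_le s.1)) hψ

/-- Let `P_1, …, P_m` be commuting orthogonal projections, `N = Σ_i (1 - P_i)`,
and `p` a polynomial with `p(0) = 1` and `|p(x)| ≤ δ` for all integers
`1 ≤ x ≤ m`.  Then `p(N)` acts as the identity on the joint ground space
`{ψ : P_i ψ = ψ ∀i}`, and for every `ψ` in the span of the violating sectors,
`‖p(N)ψ‖ ≤ δ‖ψ‖`. -/
theorem poly_of_N_shrinks_violating_sectors {m : ℕ} (P : Fin m → (H →ₗ[ℂ] H))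
    (hproj : ∀ i, (P i) ∘ₗ (P i) = P i)
    (hsa : ∀ i, LinearMap.IsSymmetric (P i))
    (hcomm : ∀ i j, Commute (P i) (P j))
    (N : Module.End ℂ H) (hN : N = ∑ i, (LinearMap.id - P i))
    (δ : ℝ) (p : Polynomial ℂ)
    (hp0 : p.eval 0 = 1)
    (hpδ : ∀ k : ℕ, 1 ≤ k → k ≤ m → ‖p.eval (k : ℂ)‖ ≤ δ) :
    (∀ ψ : H, (∀ i, P i ψ = ψ) → Polynomial.aeval N p ψ = ψ) ∧
    (∀ ψ : H,
      ψ ∈ (⨆ s ∈ {s : Fin m → Bool | s ≠ fun _ => false}, sector P s) →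
      ‖Polynomial.aeval N p ψ‖ ≤ δ * ‖ψ‖) :=
  poly_of_N_shrinks_violating_sectors_general P hsa N hN δ p hp0 hpδ
end
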